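/- arXiv:2211.15241 — 2 statements merged into one kernel-verified Lean document; each statement's English description precedes it below -/
import Mathlib

section
/- For any real n×n matrix T, max over x with ||x||_2 = 1 of ||Tx||_1 equals max over y ∈ {-1,+1}^n of sqrt(y^T T T^T y); equivalently, max_{||x||_2=1} ||Tx||_1 = max_{y∈{-1,1}^n} ||T^T y||_2. -/
open Matrix Finset

noncomputable section

/-- entrywise sign with sgn(0)=1 -/
def sgn (r : ℝ) : ℝ := if r < 0 then -1 else 1

def l1 {n : ℕ} (x : Fin n → ℝ) : ℝ := ∑ i, |x i|
def l2sq {n : ℕ} (x : Fin n → ℝ) : ℝ := ∑ i, (x i) ^ 2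
def l2 {n : ℕ} (x : Fin n → ℝ) : ℝ := Real.sqrt (l2sq x)

def cl1 {n : ℕ} (x : Fin n → ℂ) : ℝ := ∑ i, ‖x i‖
def cl2sq {n : ℕ} (x : Fin n → ℂ) : ℝ := ∑ i, Complex.normSq (x i)
def cl2 {n : ℕ} (x : Fin n → ℂ) : ℝ := Real.sqrt (cl2sq x)

/-- spectral (ℓ2 operator) norm of a real square matrix -/
def opNorm {n : ℕ} (A : Matrix (Fin n) (Fin n) ℝ) : ℝ :=
  sSup {r | ∃ x : Fin n → ℝ, l2 x = 1 ∧ r = l2 (A.mulVec x)}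

/-- spectral (ℓ2 operator) norm of a complex square matrix -/
def opNormC {n : ℕ} (A : Matrix (Fin n) (Fin n) ℂ) : ℝ :=
  sSup {r | ∃ x : Fin n → ℂ, cl2 x = 1 ∧ r = cl2 (A.mulVec x)}

/-- ℓ∞ operator norm (max absolute row sum) of a real square matrix -/
def infNorm {n : ℕ} (A : Matrix (Fin n) (Fin n) ℝ) : ℝ := ⨆ i, ∑ j, |A i j|

/-- ℓ∞ operator norm (max absolute row sum) of a complex square matrix -/
def infNormC {n : ℕ} (A : Matrix (Fin n) (Fin n) ℂ) : ℝ := ⨆ i, ∑ j, ‖A i j‖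

/-- complex torus: unit-modulus entries -/
def onTorus {n : ℕ} (x : Fin n → ℂ) : Prop := ∀ i, ‖x i‖ = 1

/-- real part of the Hermitian quadratic form x ↦ xᴴ C x -/
def quadC {n : ℕ} (C : Matrix (Fin n) (Fin n) ℂ) (x : Fin n → ℂ) : ℝ :=
  (star x ⬝ᵥ C.mulVec x).re

/-
Pairing with a sign vector `y` gives `y ⬝ᵥ T x = Tᵀ y ⬝ᵥ x`. The sign vector of `T x` turns the left
side into `‖T x‖₁`, and Cauchy–Schwarz bounds the right side by `‖Tᵀ y‖₂` when `‖x‖₂ = 1`.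
Conversely `x = Tᵀ y / ‖Tᵀ y‖₂` makes the right side equal to `‖Tᵀ y‖₂`, while the left side is
at most `‖T x‖₁` because `|y i| ≤ 1`.
-/

lemma l2sq_nonneg {n : ℕ} (x : Fin n → ℝ) : 0 ≤ l2sq x :=
  Finset.sum_nonneg fun _ _ => sq_nonneg _

lemma l2_nonneg {n : ℕ} (x : Fin n → ℝ) : 0 ≤ l2 x := Real.sqrt_nonneg _

lemma l1_nonneg {n : ℕ} (x : Fin n → ℝ) : 0 ≤ l1 x :=
  Finset.sum_nonneg fun _ _ => abs_nonneg _

lemma l2sq_eq_dotProduct_self {n : ℕ} (x : Fin n → ℝ) : l2sq x = x ⬝ᵥ x :=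
  Finset.sum_congr rfl fun i _ => sq (x i)

lemma l2_mul_self {n : ℕ} (x : Fin n → ℝ) : l2 x * l2 x = x ⬝ᵥ x := by
  rw [l2, Real.mul_self_sqrt (l2sq_nonneg x), l2sq_eq_dotProduct_self]

lemma l2_smul {n : ℕ} (a : ℝ) (x : Fin n → ℝ) : l2 (a • x) = |a| * l2 x := by
  rw [l2, l2, ← Real.sqrt_sq_eq_abs, ← Real.sqrt_mul (sq_nonneg a), l2sq, l2sq, Finset.mul_sum]
  simp only [Pi.smul_apply, smul_eq_mul, mul_pow]

lemma dotProduct_le_l2_mul_l2 {n : ℕ} (u v : Fin n → ℝ) : u ⬝ᵥ v ≤ l2 u * l2 v :=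
  calc u ⬝ᵥ v ≤ √((u ⬝ᵥ v) ^ 2) := by rw [Real.sqrt_sq_eq_abs]; exact le_abs_self _
    _ ≤ √(l2sq u * l2sq v) := Real.sqrt_le_sqrt (Finset.sum_mul_sq_le_sq_mul_sq _ u v)
    _ = l2 u * l2 v := Real.sqrt_mul (l2sq_nonneg u) _

lemma dotProduct_le_l1 {n : ℕ} {y : Fin n → ℝ} (hy : ∀ i, |y i| ≤ 1) (v : Fin n → ℝ) :
    y ⬝ᵥ v ≤ l1 v :=
  Finset.sum_le_sum fun i _ =>
    calc y i * v i ≤ |y i| * |v i| := by rw [← abs_mul]; exact le_abs_self _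
      _ ≤ |v i| := mul_le_of_le_one_left (abs_nonneg _) (hy i)

lemma sgn_eq_one_or_neg_one (r : ℝ) : sgn r = 1 ∨ sgn r = -1 := by
  unfold sgn; split_ifs <;> simp

lemma sgn_mul_self (r : ℝ) : sgn r * r = |r| := by
  unfold sgn
  split_ifs with h
  · rw [abs_of_neg h, neg_one_mul]
  · rw [abs_of_nonneg (not_lt.1 h), one_mul]

lemma sgn_dotProduct_self {n : ℕ} (v : Fin n → ℝ) : (fun i => sgn (v i)) ⬝ᵥ v = l1 v :=
  Finset.sum_congr rfl fun i _ => sgn_mul_self (v i)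

lemma l1_mulVec_le {m n : ℕ} (T : Matrix (Fin m) (Fin n) ℝ) (x : Fin n → ℝ) :
    l1 (T *ᵥ x) ≤ l2 (Tᵀ *ᵥ fun i => sgn ((T *ᵥ x) i)) * l2 x :=
  calc l1 (T *ᵥ x) = (fun i => sgn ((T *ᵥ x) i)) ⬝ᵥ T *ᵥ x := (sgn_dotProduct_self _).symm
    _ = (Tᵀ *ᵥ fun i => sgn ((T *ᵥ x) i)) ⬝ᵥ x := by rw [dotProduct_mulVec, mulVec_transpose]
    _ ≤ _ := dotProduct_le_l2_mul_l2 _ _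

lemma exists_l2_eq_one_l2_transpose_mulVec_le_l1 {m n : ℕ} (T : Matrix (Fin m) (Fin n) ℝ)
    {y : Fin m → ℝ} (hy : ∀ i, |y i| ≤ 1) (hTy : 0 < l2 (Tᵀ *ᵥ y)) :
    ∃ x, l2 x = 1 ∧ l2 (Tᵀ *ᵥ y) ≤ l1 (T *ᵥ x) := by
  set w := Tᵀ *ᵥ y
  refine ⟨(l2 w)⁻¹ • w, ?_, ?_⟩
  · rw [l2_smul, abs_of_pos (inv_pos.2 hTy), inv_mul_cancel₀ hTy.ne']
  · calc l2 w = w ⬝ᵥ (l2 w)⁻¹ • w := by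
          rw [dotProduct_smul, ← l2_mul_self, smul_eq_mul, inv_mul_cancel_left₀ hTy.ne']
      _ = y ⬝ᵥ T *ᵥ ((l2 w)⁻¹ • w) := by rw [dotProduct_mulVec, ← mulVec_transpose]
      _ ≤ l1 (T *ᵥ ((l2 w)⁻¹ • w)) := dotProduct_le_l1 hy _

lemma abs_le_one_of_eq_one_or_eq_neg_one {r : ℝ} (h : r = 1 ∨ r = -1) : |r| ≤ 1 := by
  rcases h with rfl | rfl <;> simp

theorem stmt_1 {n : ℕ} (T : Matrix (Fin n) (Fin n) ℝ) :
    sSup {r | ∃ x : Fin n → ℝ, l2 x = 1 ∧ r = l1 (T.mulVec x)} =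
      sSup {r | ∃ y : Fin n → ℝ, (∀ i, y i = 1 ∨ y i = -1) ∧ r = l2 (Tᵀ.mulVec y)} := by
  set A := {r | ∃ x : Fin n → ℝ, l2 x = 1 ∧ r = l1 (T.mulVec x)}
  set B := {r | ∃ y : Fin n → ℝ, (∀ i, y i = 1 ∨ y i = -1) ∧ r = l2 (Tᵀ.mulVec y)}
  have hB_bdd : BddAbove B := by
    refine ((Set.Finite.pi fun _ => Set.toFinite ({1, -1} : Set ℝ)).image
      fun y => l2 (Tᵀ *ᵥ y)).bddAbove.mono ?_
    rintro r ⟨y, hy, rfl⟩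
    exact ⟨y, fun i _ => hy i, rfl⟩
  have hA_le : ∀ r ∈ A, r ≤ sSup B := by
    rintro r ⟨x, hx, rfl⟩
    calc l1 (T *ᵥ x) ≤ l2 (Tᵀ *ᵥ fun i => sgn ((T *ᵥ x) i)) := by
          simpa [hx] using l1_mulVec_le T x
      _ ≤ sSup B := le_csSup hB_bdd ⟨_, fun i => sgn_eq_one_or_neg_one _, rfl⟩
  have hA_nonneg : 0 ≤ sSup A := Real.sSup_nonneg <| by rintro _ ⟨x, -, rfl⟩; exact l1_nonneg _
  have hB_le : ∀ r ∈ B, r ≤ sSup A := by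
    rintro r ⟨y, hy, rfl⟩
    rcases (l2_nonneg (Tᵀ *ᵥ y)).eq_or_lt with h0 | hpos
    · rw [← h0]; exact hA_nonneg
    obtain ⟨x, hx, hle⟩ := exists_l2_eq_one_l2_transpose_mulVec_le_l1 T
      (fun i => abs_le_one_of_eq_one_or_eq_neg_one (hy i)) hpos
    exact hle.trans (le_csSup ⟨sSup B, hA_le⟩ ⟨x, hx, rfl⟩)
  have hB_nonneg : 0 ≤ sSup B := Real.sSup_nonneg <| by rintro _ ⟨y, -, rfl⟩; exact l2_nonneg _
  -- `Real.sSup_le` also covers `n = 0`, where `A = ∅` and `sSup ∅ = 0`.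
  exact le_antisymm (Real.sSup_le hA_le hB_nonneg) (Real.sSup_le hB_le hA_nonneg)
end
end

section
/- Let C be a Hermitian N×N matrix and define the power-method map T(x) = sgn(Cx) on T^N (assuming (Cx)_i ≠ 0 for all i along the iterates). Then f(x) = x^H C x satisfies f(T(x)) ≥ f(x), with equality only if T(x) = x; hence the iterates of the generalized power method do not cycle when C ⪰ 0. -/
open Matrix Finset

noncomputable section

/-! With `y = C x` and `t = T x`, the sum `S = ∑ i, ‖y i‖` equals `tᴴ y`, and it dominates
`Re (xᴴ y) = f x` termwise because `‖x i‖ = 1`, with equality only if `x i = y i / ‖y i‖`.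
As `C` is Hermitian, `0 ≤ f (t - x) = f t + f x - 2 S`, so `f t ≥ 2 S - f x ≥ f x`; and
`f t = f x` forces `S = f x`, hence `x = t`. -/

open ComplexConjugate
open scoped ComplexOrder

namespace Complex

lemma conj_div_norm_mul_self (z : ℂ) : conj (z / ‖z‖) * z = ‖z‖ := by
  rcases eq_or_ne z 0 with rfl | hz
  · simp
  rw [map_div₀, conj_ofReal, div_mul_eq_mul_div, conj_mul', sq,
    mul_div_cancel_right₀ _ (ofReal_ne_zero.mpr (norm_ne_zero_iff.mpr hz))]

lemma re_conj_mul_le_norm {w : ℂ} (hw : ‖w‖ = 1) (z : ℂ) : (conj w * z).re ≤ ‖z‖ := by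
  simpa [hw] using re_le_norm (conj w * z)

lemma eq_div_norm_of_re_conj_mul_eq_norm {w z : ℂ} (hw : ‖w‖ = 1) (hz : z ≠ 0)
    (h : (conj w * z).re = ‖z‖) : w = z / ‖z‖ := by
  have hnorm : ‖conj w * z‖ = ‖z‖ := by rw [norm_mul, norm_conj, hw, one_mul]
  have hreal : conj w * z = ‖z‖ := by
    have hnonneg : 0 ≤ conj w * z := re_eq_norm.mp (h.trans hnorm.symm)
    rw [eq_re_of_ofReal_le (z := conj w * z) (r := 0) (by simpa using hnonneg), h]
  have hz_eq : w * ‖z‖ = z := by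
    rw [← hreal, ← mul_assoc, mul_conj', hw, ofReal_one, one_pow, one_mul]
  exact eq_div_of_mul_eq (ofReal_ne_zero.mpr (norm_ne_zero_iff.mpr hz)) hz_eq

end Complex

section DotProduct

variable {ι : Type*} [Fintype ι]

lemma star_div_norm_dotProduct_self (y : ι → ℂ) :
    star (fun i ↦ y i / (‖y i‖ : ℂ)) ⬝ᵥ y = ((∑ i, ‖y i‖ : ℝ) : ℂ) := by
  simp only [dotProduct, Pi.star_apply, Complex.star_def, Complex.conj_div_norm_mul_self]
  push_cast
  rfl

lemma re_star_dotProduct_le_sum_norm {x : ι → ℂ} (hx : ∀ i, ‖x i‖ = 1) (y : ι → ℂ) :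
    (star x ⬝ᵥ y).re ≤ ∑ i, ‖y i‖ := by
  simp only [dotProduct, Pi.star_apply, Complex.re_sum, Complex.star_def]
  exact sum_le_sum fun i _ ↦ Complex.re_conj_mul_le_norm (hx i) (y i)

lemma eq_div_norm_of_re_star_dotProduct_eq {x y : ι → ℂ} (hx : ∀ i, ‖x i‖ = 1)
    (hy : ∀ i, y i ≠ 0) (h : (star x ⬝ᵥ y).re = ∑ i, ‖y i‖) :
    x = fun i ↦ y i / (‖y i‖ : ℂ) := by
  simp only [dotProduct, Pi.star_apply, Complex.re_sum, Complex.star_def] at h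
  have htermwise :=
    (sum_eq_sum_iff_of_le fun i _ ↦ Complex.re_conj_mul_le_norm (hx i) (y i)).mp h
  exact funext fun i ↦
    Complex.eq_div_norm_of_re_conj_mul_eq_norm (hx i) (hy i) (htermwise i (mem_univ i))

lemma Matrix.IsHermitian.star_dotProduct_mulVec_comm {R : Type*} [CommSemiring R] [StarRing R]
    {C : Matrix ι ι R} (hC : C.IsHermitian) (u v : ι → R) :
    star u ⬝ᵥ C *ᵥ v = star (star v ⬝ᵥ C *ᵥ u) := by
  rw [star_dotProduct, star_mulVec, hC.eq, ← dotProduct_mulVec]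

end DotProduct

lemma quadC_sub {n : ℕ} {C : Matrix (Fin n) (Fin n) ℂ} (hC : C.IsHermitian)
    (u v : Fin n → ℂ) :
    quadC C (u - v) = quadC C u + quadC C v - 2 * (star u ⬝ᵥ C *ᵥ v).re := by
  have := hC.star_dotProduct_mulVec_comm v u
  simp only [quadC, star_sub, mulVec_sub, sub_dotProduct, dotProduct_sub, Complex.sub_re, this,
    Complex.star_def, Complex.conj_re]
  ring

theorem stmt_11 {N : ℕ} (C : Matrix (Fin N) (Fin N) ℂ) (hC : C.IsHermitian)
    (hPSD : ∀ u : Fin N → ℂ, 0 ≤ quadC C u)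
    (x : Fin N → ℂ) (hx : onTorus x)
    (hCx : ∀ i, (C.mulVec x) i ≠ 0)
    (Tx : Fin N → ℂ)
    (hTx : ∀ i, Tx i = (C.mulVec x) i / (‖(C.mulVec x) i‖ : ℂ)) :
    quadC C x ≤ quadC C Tx ∧ (quadC C Tx = quadC C x → Tx = x) := by
  have ht : Tx = fun i ↦ (C *ᵥ x) i / (‖(C *ᵥ x) i‖ : ℂ) := funext hTx
  have hcross : (star Tx ⬝ᵥ C *ᵥ x).re = ∑ i, ‖(C *ᵥ x) i‖ := by
    rw [ht, star_div_norm_dotProduct_self, Complex.ofReal_re]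
  have hle : quadC C x ≤ ∑ i, ‖(C *ᵥ x) i‖ := re_star_dotProduct_le_sum_norm hx _
  have hgap := hPSD (Tx - x)
  rw [quadC_sub hC, hcross] at hgap
  refine ⟨by linarith, fun heq ↦ ?_⟩
  have hsum : quadC C x = ∑ i, ‖(C *ᵥ x) i‖ := by linarith
  exact ht.trans (eq_div_norm_of_re_star_dotProduct_eq hx hCx hsum).symm
end
end
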